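/- For every sequence x of distinct integers of length m ≥ 1, the sum of the Skipped-number values satisfies ∑_{j=1}^{m} SN_x[j] ≤ m - 1. -/

import Mathlib

/-- Binary tree shapes (Cartesian trees are determined by their shape). -/
inductive BTree : Type
  | nil : BTree
  | node : BTree → BTree → BTree
deriving DecidableEq

namespace BTree

/-- Number of nodes. -/
def size : BTree → ℕ
  | nil => 0
  | node l r => size l + size r + 1

/-- Length of the leftmost path. -/
def LMP : BTree → ℕ
  | nil => 0
  | node l _ => LMP l + 1

/-- Length of the rightmost path. -/
def RMP : BTree → ℕ
  | nil => 0
  | node _ r => RMP r + 1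

end BTree

/-- Minimum value of a list (0 for the empty list). -/
def listMin : List ℤ → ℤ
  | [] => 0
  | a :: t => t.foldl min a

/-- Index (0-based) of the minimum of a list. -/
def minIdx (l : List ℤ) : ℕ := l.idxOf (listMin l)

/-- Cartesian tree of a list, with fuel for termination. -/
def ctreeAux : ℕ → List ℤ → BTree
  | 0, _ => .nil
  | _ + 1, [] => .nil
  | n + 1, a :: t =>
      let g := minIdx (a :: t)
      .node (ctreeAux n ((a :: t).take g)) (ctreeAux n ((a :: t).drop (g + 1)))

/-- Cartesian tree of a list: the root is the position of the minimum,
its subtrees are the Cartesian trees of the prefix and suffix around it. -/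
def ctreeL (l : List ℤ) : BTree := ctreeAux l.length l

/-- The factor x[a..b] (1-based positions) of a sequence, as a list. -/
def seqList (x : ℕ → ℤ) (a b : ℕ) : List ℤ :=
  (List.range (b + 1 - a)).map (fun k => x (a + k))

/-- Cartesian tree of the sequence x[1..m]. -/
def ctreeOf (m : ℕ) (x : ℕ → ℤ) : BTree := ctreeL (seqList x 1 m)

/-- Positions j < h (1-based) with x[j] < x[h]. -/
def PDset (x : ℕ → ℤ) (h : ℕ) : Finset ℕ :=
  (Finset.Ico 1 h).filter (fun j => x j < x h)

/-- Parent-distance table: PD_x[h] = h - max{j < h : x[j] < x[h]}, 0 if no such j. -/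
def PD (x : ℕ → ℤ) (h : ℕ) : ℕ :=
  if hs : (PDset x h).Nonempty then h - (PDset x h).max' hs else 0

/-- Positions h < j ≤ m with x[j] < x[h]. -/
def RPDset (m : ℕ) (x : ℕ → ℤ) (h : ℕ) : Finset ℕ :=
  (Finset.Ioc h m).filter (fun j => x j < x h)

/-- Reverse parent-distance table: RPD_x[h] = min{j > h : x[j] < x[h]} - h, 0 if no such j. -/
def RPD (m : ℕ) (x : ℕ → ℤ) (h : ℕ) : ℕ :=
  if hs : (RPDset m x h).Nonempty then (RPDset m x h).min' hs - h else 0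

/-- Referent of h: the smallest position j > h with x[j] < x[h], or -1 if none. -/
def refD (m : ℕ) (x : ℕ → ℤ) (h : ℕ) : ℤ :=
  if hs : (RPDset m x h).Nonempty then ((RPDset m x h).min' hs : ℤ) else -1

/-- Skipped-number table: SN_x[h] is the number of nodes on the rightmost path of the
left subtree of node h in C(x), i.e. the number of positions whose referent is h. -/
def SN (m : ℕ) (x : ℕ → ℤ) (h : ℕ) : ℕ :=
  ((Finset.Ico 1 h).filter (fun j => refD m x j = (h : ℤ))).card

/-- The swap τ(x,i): exchange the entries at positions i and i+1. -/
def swapAt (x : ℕ → ℤ) (i : ℕ) : ℕ → ℤ :=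
  fun j => if j = i then x (i + 1) else if j = i + 1 then x i else x j

/-- ng(T,i): the Cartesian trees obtained from a sequence realizing T by one swap
at position i (valid positions are 1 ≤ i ≤ m-1). -/
def ngi (m : ℕ) (T : BTree) (i : ℕ) : Set BTree :=
  { S | 1 ≤ i ∧ i + 1 ≤ m ∧ ∃ x : ℕ → ℤ, Set.InjOn x (Set.Icc 1 m) ∧
        ctreeOf m x = T ∧ S = ctreeOf m (swapAt x i) }

/-- ng(T): the swap neighbourhood of T. -/
def ng (m : ℕ) (T : BTree) : Set BTree := ⋃ i, ngi m T i

/-- Number of permutations of {1,...,n} whose Cartesian tree is A. -/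
noncomputable def permCount (n : ℕ) (A : BTree) : ℕ :=
  Set.ncard { σ : Equiv.Perm (Fin n) |
    ctreeL (List.ofFn (fun k : Fin n => ((σ k : ℕ) : ℤ) + 1)) = A }

/-- Product over all nodes t of A of the size of the subtree rooted at t. -/
def hookProd : BTree → ℕ
  | .nil => 1
  | .node l r => (BTree.node l r).size * hookProd l * hookProd r

/-! `SN m x h` counts the positions j < h whose referent is h. A position has a single referent,
so for h ≤ m these sets are disjoint subsets of `[1, m)`. -/

open Finset

theorem Finset.sum_card_filter_eq_le_card {α β γ : Type*} [DecidableEq α] [DecidableEq β]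
    {s : Finset α} {t : Finset γ} {f : α → β} {g : γ → β} (hg : Set.InjOn g t) :
    ∑ c ∈ t, #{a ∈ s | f a = g c} ≤ #s := by
  have hdisj : (t : Set γ).PairwiseDisjoint fun c => {a ∈ s | f a = g c} :=
    fun c hc c' hc' hne => disjoint_filter.2 fun _ _ hac hac' =>
      hne (hg hc hc' (hac.symm.trans hac'))
  rw [← card_biUnion hdisj]
  exact card_le_card (biUnion_subset.2 fun _ _ => filter_subset _ _)

theorem SN_le_card_filter_refD_eq {m h : ℕ} (hh : h ≤ m) (x : ℕ → ℤ) :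
    SN m x h ≤ #{j ∈ Ico 1 m | refD m x j = h} :=
  card_le_card (filter_subset_filter _ (Ico_subset_Ico_right hh))

theorem stmt1_general (m : ℕ) (x : ℕ → ℤ) :
    ∑ j ∈ Finset.Icc 1 m, SN m x j ≤ m - 1 := by
  calc ∑ h ∈ Icc 1 m, SN m x h
      ≤ ∑ h ∈ Icc 1 m, #{j ∈ Ico 1 m | refD m x j = h} :=
        sum_le_sum fun _ hh => SN_le_card_filter_refD_eq (mem_Icc.1 hh).2 x
    _ ≤ #(Ico 1 m) := sum_card_filter_eq_le_card Nat.cast_injective.injOn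
    _ = m - 1 := Nat.card_Ico 1 m

theorem stmt1 (m : ℕ) (hm : 1 ≤ m) (x : ℕ → ℤ) (hx : Set.InjOn x (Set.Icc 1 m)) :
    ∑ j ∈ Finset.Icc 1 m, SN m x j ≤ m - 1 :=
  stmt1_general m x
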